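/- In the homogeneous case m_x = m for all x, the total current J = Σ_x (ω/√m) π_x · (q_{x+e_1} - q_{x-e_1}) satisfies (λ - L)^{-1} J = J/(λ + γ) for every λ > 0; equivalently, L J = -γ J where L = A + γ S. -/

import Mathlib

open scoped BigOperators

/-- Phase-space configurations `(π, q)` on the discrete torus. -/
abbrev Cfg (d N : ℕ) :=
  ((Fin d → ZMod N) → Fin d → ℝ) × ((Fin d → ZMod N) → Fin d → ℝ)

/-- Partial derivative with respect to `π_x^i`. -/
noncomputable def pderP {d N : ℕ} [NeZero N] (x : Fin d → ZMod N) (i : Fin d)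
    (f : Cfg d N → ℝ) (c : Cfg d N) : ℝ :=
  fderiv ℝ f c (Pi.single x (Pi.single i 1), 0)

/-- Partial derivative with respect to `q_x^i`. -/
noncomputable def pderQ {d N : ℕ} [NeZero N] (x : Fin d → ZMod N) (i : Fin d)
    (f : Cfg d N → ℝ) (c : Cfg d N) : ℝ :=
  fderiv ℝ f c (0, Pi.single x (Pi.single i 1))

/-- The vector field `Y^{i,j}_{x,x+e_k}`, acting on the velocities. -/
noncomputable def Yop {d N : ℕ} [NeZero N] (x : Fin d → ZMod N) (k i j : Fin d)
    (f : Cfg d N → ℝ) (c : Cfg d N) : ℝ :=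
  c.1 (x + Pi.single k 1) j * pderP x i f c - c.1 x i * pderP (x + Pi.single k 1) j f c

/-- The noise generator `S = (1/(2d²)) Σ_{i,j,k} Σ_x (Y^{i,j}_{x,x+e_k})²`. -/
noncomputable def Sop {d N : ℕ} [NeZero N] (f : Cfg d N → ℝ) (c : Cfg d N) : ℝ :=
  (1 / (2 * (d : ℝ) ^ 2)) *
    ∑ i : Fin d, ∑ j : Fin d, ∑ k : Fin d, ∑ x : Fin d → ZMod N,
      Yop x k i j (Yop x k i j f) c

/-- The Hamiltonian vector field
`A = Σ_x { (1/√m_x) π_x ⋅ ∂_{q_x} + (1/√m_x)(ω Δq_x - ν q_x) ⋅ ∂_{π_x} }`. -/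
noncomputable def Aop {d N : ℕ} [NeZero N] (m : (Fin d → ZMod N) → ℝ) (ω ν : ℝ)
    (f : Cfg d N → ℝ) (c : Cfg d N) : ℝ :=
  ∑ x : Fin d → ZMod N, ∑ i : Fin d,
    ((1 / Real.sqrt (m x)) * c.1 x i * pderQ x i f c
      + (1 / Real.sqrt (m x)) *
          (ω * (∑ j, (c.2 (x + Pi.single j 1) i + c.2 (x - Pi.single j 1) i - 2 * c.2 x i))
            - ν * c.2 x i) * pderP x i f c)

/-!
The current is linear in the momenta: `J = ⟪π, κ D q⟫` with `κ = ω/√m` and `D` the central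
difference in direction `e₁`. For `f = ⟪π, g q⟫`, `Y^{i,j}_{x,x+e_k} f` is again linear in the
momenta and `(Y^{i,j}_{x,x+e_k})² f = -(π_x^i g_x^i + π_{x+e_k}^j g_{x+e_k}^j)`; summed over
`i, j, k, x` this counts every term of `f` exactly `2d²` times, so `S f = -f`. The Hamiltonian part
is `A J = (κ/√m) (⟪π, Dᵀ π⟫ + ⟪ωΔq - νq, D q⟫)`, and both terms vanish because `D` is
antisymmetric and commutes with the translation-invariant `Δ`.
-/

section TranslationInvariance

variable {G : Type*} [AddCommGroup G] [Fintype G]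

theorem sum_comp_add_mul_comp_add_eq_sum_comp_sub_mul_comp_sub (f : G → ℝ) (a c : G) :
    ∑ x, f (x + a) * f (x + c) = ∑ x, f (x - a) * f (x - c) := by
  refine Fintype.sum_equiv (Equiv.addRight (a + c)) _ _ fun x => ?_
  rw [mul_comm]
  simp only [Equiv.coe_addRight]
  congr 2 <;> abel

theorem sum_mul_centralDiff_eq_zero (f : G → ℝ) (e : G) :
    ∑ x, f x * (f (x + e) - f (x - e)) = 0 := by
  simpa [mul_sub, Finset.sum_sub_distrib, sub_eq_zero] using
    sum_comp_add_mul_comp_add_eq_sum_comp_sub_mul_comp_sub f 0 e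

theorem sum_secondDiff_mul_centralDiff_eq_zero (f : G → ℝ) (b e : G) :
    ∑ x, (f (x + b) + f (x - b) - 2 * f x) * (f (x + e) - f (x - e)) = 0 := by
  have hsame := sum_comp_add_mul_comp_add_eq_sum_comp_sub_mul_comp_sub f b e
  have hcross : ∑ x, f (x + b) * f (x - e) = ∑ x, f (x - b) * f (x + e) := by
    simpa [← sub_eq_add_neg] using
      sum_comp_add_mul_comp_add_eq_sum_comp_sub_mul_comp_sub f b (-e)
  have hsplit : ∀ x, (f (x + b) + f (x - b) - 2 * f x) * (f (x + e) - f (x - e))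
      = f (x + b) * f (x + e) - f (x - b) * f (x - e)
        - (f (x + b) * f (x - e) - f (x - b) * f (x + e))
        - 2 * (f x * (f (x + e) - f (x - e))) := fun x => by ring
  simp only [hsplit, Finset.sum_sub_distrib, ← Finset.mul_sum, sum_mul_centralDiff_eq_zero,
    hsame, hcross]
  ring

end TranslationInvariance

abbrev TorusField (d N : ℕ) := (Fin d → ZMod N) → Fin d → ℝ

section MomentumLinear

variable {d N : ℕ} [NeZero N]

def momentumLinear (g : TorusField d N → TorusField d N) (c : Cfg d N) : ℝ :=
  ∑ y, ∑ l, c.1 y l * g c.2 y l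

theorem fderiv_momentumLinear_apply {g : TorusField d N → TorusField d N}
    {g' : TorusField d N →L[ℝ] TorusField d N} {c : Cfg d N} (hg : HasFDerivAt g g' c.2)
    (u v : TorusField d N) :
    fderiv ℝ (momentumLinear g) c (u, v)
      = ∑ y, ∑ l, (u y l * g c.2 y l + c.1 y l * g' v y l) := by
  have hcoord y l := (hasFDerivAt_apply l _).comp c ((hasFDerivAt_apply y _).comp c
    (hasFDerivAt_fst (𝕜 := ℝ) (p := c)))
  have hcoeff y l := (hasFDerivAt_apply l _).comp c ((hasFDerivAt_apply y _).comp c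
    (hg.comp c (hasFDerivAt_snd (p := c))))
  have hsum : HasFDerivAt (momentumLinear g) _ c := HasFDerivAt.fun_sum fun y _ =>
    HasFDerivAt.fun_sum fun l _ => (hcoord y l).mul (hcoeff y l)
  rw [hsum.fderiv]
  simp [add_comm, mul_comm]

theorem pderP_momentumLinear {g : TorusField d N → TorusField d N} {c : Cfg d N}
    (hg : DifferentiableAt ℝ g c.2) (y : Fin d → ZMod N) (l : Fin d) :
    pderP y l (momentumLinear g) c = g c.2 y l := by
  rw [pderP, fderiv_momentumLinear_apply hg.hasFDerivAt]
  simp [Pi.single_apply, ite_apply]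

theorem pderQ_momentumLinear {g : TorusField d N → TorusField d N}
    {g' : TorusField d N →L[ℝ] TorusField d N} {c : Cfg d N} (hg : HasFDerivAt g g' c.2)
    (y : Fin d → ZMod N) (l : Fin d) :
    pderQ y l (momentumLinear g) c
      = ∑ y', ∑ l', c.1 y' l' * g' (Pi.single y (Pi.single l 1)) y' l' := by
  rw [pderQ, fderiv_momentumLinear_apply hg]
  simp

theorem yop_momentumLinear {g : TorusField d N → TorusField d N} (hg : Differentiable ℝ g)
    (x : Fin d → ZMod N) (k i j : Fin d) :
    Yop x k i j (momentumLinear g) = momentumLinear fun q =>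
      g q x i • (Pi.single (x + Pi.single k 1) (Pi.single j 1) : TorusField d N)
        - g q (x + Pi.single k 1) j • (Pi.single x (Pi.single i 1) : TorusField d N) := by
  funext c
  simp [Yop, pderP_momentumLinear (hg _), momentumLinear, Pi.single_apply, ite_apply, mul_sub,
    Finset.sum_sub_distrib, mul_comm]

theorem yop_yop_momentumLinear [Nontrivial (ZMod N)] {g : TorusField d N → TorusField d N}
    (hg : Differentiable ℝ g) (x : Fin d → ZMod N) (k i j : Fin d) (c : Cfg d N) :
    Yop x k i j (Yop x k i j (momentumLinear g)) c
      = -(c.1 (x + Pi.single k 1) j * g c.2 (x + Pi.single k 1) j + c.1 x i * g c.2 x i) := by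
  have hne : x + Pi.single k 1 ≠ x := by simp
  rw [yop_momentumLinear hg, Yop, pderP_momentumLinear (by fun_prop),
    pderP_momentumLinear (by fun_prop)]
  simp [hne, hne.symm, sub_eq_add_neg, add_comm]

theorem sop_momentumLinear [Nontrivial (ZMod N)] (hd : d ≠ 0)
    {g : TorusField d N → TorusField d N} (hg : Differentiable ℝ g) (c : Cfg d N) :
    Sop (momentumLinear g) c = -momentumLinear g c := by
  set t : Fin d → ℝ := fun l => ∑ x, c.1 x l * g c.2 x l
  have hsite : ∀ i j k : Fin d, ∑ x, Yop x k i j (Yop x k i j (momentumLinear g)) c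
      = -(t j + t i) := fun i j k => by
    have hshift : ∑ x, c.1 (x + Pi.single k 1) j * g c.2 (x + Pi.single k 1) j = t j :=
      Fintype.sum_equiv (Equiv.addRight _) _ _ fun _ => rfl
    rw [Finset.sum_congr rfl fun x _ => yop_yop_momentumLinear hg x k i j c,
      Finset.sum_neg_distrib, Finset.sum_add_distrib, hshift]
  have hcomponents : momentumLinear g c = ∑ l, t l := Finset.sum_comm
  simp only [Sop, hsite, hcomponents, Finset.sum_neg_distrib, Finset.sum_add_distrib, Finset.sum_const,
    Finset.card_univ, Fintype.card_fin, nsmul_eq_mul, ← Finset.mul_sum]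
  field_simp
  ring

end MomentumLinear

section CentralDifference

variable {G E : Type*} [AddCommGroup G] [NormedAddCommGroup E] [NormedSpace ℝ E]

def centralDiff (e : G) : (G → E) →L[ℝ] (G → E) :=
  ContinuousLinearMap.pi fun y =>
    ContinuousLinearMap.proj (R := ℝ) (φ := fun _ : G => E) (y + e)
      - ContinuousLinearMap.proj (y - e)

@[simp]
theorem centralDiff_apply (e : G) (q : G → E) (y : G) :
    centralDiff e q y = q (y + e) - q (y - e) := rfl

theorem sum_hamiltonian_mul_centralDiff_eq_zero [Fintype G] {ι : Type*} [Fintype ι] (b : ι → G)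
    (s κ ω ν : ℝ) (e : G) (p Q : G → ℝ) :
    ∑ x, (s * p x * (κ * (p (x - e) - p (x + e)))
      + s * (ω * ∑ j, (Q (x + b j) + Q (x - b j) - 2 * Q x) - ν * Q x)
          * (κ * (Q (x + e) - Q (x - e)))) = 0 := by
  have hsplit : ∀ x, s * p x * (κ * (p (x - e) - p (x + e)))
      + s * (ω * ∑ j, (Q (x + b j) + Q (x - b j) - 2 * Q x) - ν * Q x)
          * (κ * (Q (x + e) - Q (x - e)))
      = s * κ * ω * ∑ j, (Q (x + b j) + Q (x - b j) - 2 * Q x) * (Q (x + e) - Q (x - e))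
        - s * κ * (p x * (p (x + e) - p (x - e)))
        - s * κ * ν * (Q x * (Q (x + e) - Q (x - e))) := fun x => by
    rw [← Finset.sum_mul]
    ring
  rw [Finset.sum_congr rfl fun x _ => hsplit x]
  simp only [Finset.sum_sub_distrib, ← Finset.mul_sum, sum_mul_centralDiff_eq_zero]
  rw [Finset.sum_comm]
  simp [sum_secondDiff_mul_centralDiff_eq_zero]

end CentralDifference

section TorusCurrent

variable {d N : ℕ} [NeZero N]

theorem pderQ_momentumLinear_centralDiff (κ : ℝ) (e : Fin d → ZMod N) (c : Cfg d N)
    (y : Fin d → ZMod N) (l : Fin d) :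
    pderQ y l (momentumLinear ⇑(κ • centralDiff e)) c
      = κ * (c.1 (y - e) l - c.1 (y + e) l) := by
  have hplus : ∀ x : Fin d → ZMod N, x + e = y ↔ x = y - e := fun x => eq_sub_iff_add_eq.symm
  have hminus : ∀ x : Fin d → ZMod N, x - e = y ↔ x = y + e := fun x => sub_eq_iff_eq_add
  rw [pderQ_momentumLinear (ContinuousLinearMap.hasFDerivAt _)]
  simp [Pi.single_apply, ite_apply, hplus, hminus, mul_sub, Finset.sum_sub_distrib,
    mul_comm]

theorem aop_momentumLinear_centralDiff (m ω ν κ : ℝ) (e : Fin d → ZMod N) (c : Cfg d N) :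
    Aop (fun _ => m) ω ν (momentumLinear ⇑(κ • centralDiff e)) c = 0 := by
  simp only [Aop, pderQ_momentumLinear_centralDiff,
    pderP_momentumLinear (ContinuousLinearMap.differentiableAt _)]
  rw [Finset.sum_comm]
  refine Finset.sum_eq_zero fun i _ => ?_
  simpa using sum_hamiltonian_mul_centralDiff_eq_zero (fun j => Pi.single j 1) (1 / √m) κ ω ν e
    (fun x => c.1 x i) (fun x => c.2 x i)

def current (κ : ℝ) (e : Fin d → ZMod N) (c : Cfg d N) : ℝ :=
  ∑ x, κ * ∑ i, c.1 x i * (c.2 (x + e) i - c.2 (x - e) i)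

theorem current_eq_momentumLinear (κ : ℝ) (e : Fin d → ZMod N) :
    current κ e = momentumLinear ⇑(κ • centralDiff e) := by
  funext c
  simp [current, momentumLinear, Finset.mul_sum, mul_left_comm]

theorem aop_add_mul_sop_current [Nontrivial (ZMod N)] (hd : d ≠ 0) (m ω ν γ κ : ℝ)
    (e : Fin d → ZMod N) (c : Cfg d N) :
    Aop (fun _ => m) ω ν (current κ e) c + γ * Sop (current κ e) c = -γ * current κ e c := by
  rw [current_eq_momentumLinear, aop_momentumLinear_centralDiff,
    sop_momentumLinear hd (ContinuousLinearMap.differentiable _)]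
  ring

end TorusCurrent

theorem LJ_eq_neg_gamma_J_general (d N : ℕ) [NeZero N] (hd : 0 < d) (hN : 3 ≤ N)
    (m ω ν γ : ℝ) :
    ∀ c : Cfg d N,
      Aop (fun _ => m) ω ν
          (fun c : Cfg d N => ∑ x, (ω / Real.sqrt m) *
            ∑ i, c.1 x i * (c.2 (x + Pi.single (⟨0, hd⟩ : Fin d) 1) i
                              - c.2 (x - Pi.single (⟨0, hd⟩ : Fin d) 1) i)) c
        + γ * Sop (fun c : Cfg d N => ∑ x, (ω / Real.sqrt m) *
            ∑ i, c.1 x i * (c.2 (x + Pi.single (⟨0, hd⟩ : Fin d) 1) i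
                              - c.2 (x - Pi.single (⟨0, hd⟩ : Fin d) 1) i)) c
      = -γ * (∑ x, (ω / Real.sqrt m) *
            ∑ i, c.1 x i * (c.2 (x + Pi.single (⟨0, hd⟩ : Fin d) 1) i
                              - c.2 (x - Pi.single (⟨0, hd⟩ : Fin d) 1) i)) := by
  have : Fact (1 < N) := ⟨by omega⟩
  exact aop_add_mul_sop_current hd.ne' m ω ν γ _ _

/-- in the homogeneous case `m_x = m`, the total current
`J = (ω/√m) Σ_x π_x ⋅ (q_{x+e_1} - q_{x-e_1})` satisfies `L J = -γ J`
where `L = A + γ S`; equivalently `(λ - L)^{-1} J = J/(λ+γ)` for all `λ > 0`. -/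
theorem LJ_eq_neg_gamma_J (d N : ℕ) [NeZero N] (hd : 0 < d) (hN : 3 ≤ N)
    (m ω ν γ : ℝ) (hm : 0 < m) (hω : 0 < ω) (hν : 0 < ν) (hγ : 0 < γ) :
    ∀ c : Cfg d N,
      Aop (fun _ => m) ω ν
          (fun c : Cfg d N => ∑ x, (ω / Real.sqrt m) *
            ∑ i, c.1 x i * (c.2 (x + Pi.single (⟨0, hd⟩ : Fin d) 1) i
                              - c.2 (x - Pi.single (⟨0, hd⟩ : Fin d) 1) i)) c
        + γ * Sop (fun c : Cfg d N => ∑ x, (ω / Real.sqrt m) *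
            ∑ i, c.1 x i * (c.2 (x + Pi.single (⟨0, hd⟩ : Fin d) 1) i
                              - c.2 (x - Pi.single (⟨0, hd⟩ : Fin d) 1) i)) c
      = -γ * (∑ x, (ω / Real.sqrt m) *
            ∑ i, c.1 x i * (c.2 (x + Pi.single (⟨0, hd⟩ : Fin d) 1) i
                              - c.2 (x - Pi.single (⟨0, hd⟩ : Fin d) 1) i)) :=
  LJ_eq_neg_gamma_J_general d N hd hN m ω ν γ
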